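/- arXiv:1906.10933 — 2 statements merged into one kernel-verified Lean document; each statement's English description precedes it below -/
import Mathlib

section
/- Let A ⊂ E be an admissible acceptance set and assume X_i = E for every i ∈ {1,…,d}. If S(X) = Σ_{i=1}^d X_i for every X ∈ X (and S is an admissible impact map), then α = σ_{S^{-1}(A)}. -/
open MeasureTheory Filter Set
open scoped ENNReal

noncomputable section

namespace SystemicRisk

variable {Ω : Type*} [MeasurableSpace Ω]

/-- A random variable is essentially bounded. -/
def EssBdd {μ : Measure Ω} (f : Ω →ₘ[μ] ℝ) : Prop :=
  ∃ C : ℝ, ∀ᵐ ω ∂μ, |f ω| ≤ C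

/-- The scalar pairing `E[U W]`. -/
def ip {μ : Measure Ω} (U W : Ω →ₘ[μ] ℝ) : ℝ := ∫ ω, U ω * W ω ∂μ

/-- The Köthe dual of a set of random variables. -/
def kdual {μ : Measure Ω} (L : Set (Ω →ₘ[μ] ℝ)) : Set (Ω →ₘ[μ] ℝ) :=
  {Z | ∀ f ∈ L, Integrable (fun ω => f ω * Z ω) μ}

/-- `nrm` is a Banach lattice norm on `L` (w.r.t. the a.s. order). -/
structure IsBLNorm {μ : Measure Ω} (L : Set (Ω →ₘ[μ] ℝ)) (nrm : (Ω →ₘ[μ] ℝ) → ℝ) : Prop where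
  nonneg : ∀ f ∈ L, 0 ≤ nrm f
  eq_zero_iff : ∀ f ∈ L, (nrm f = 0 ↔ f = 0)
  smul_eq : ∀ f ∈ L, ∀ c : ℝ, nrm (c • f) = |c| * nrm f
  triangle : ∀ f ∈ L, ∀ g ∈ L, nrm (f + g) ≤ nrm f + nrm g
  solid : ∀ f ∈ L, ∀ g ∈ L, |f| ≤ |g| → nrm f ≤ nrm g
  complete : ∀ u : ℕ → (Ω →ₘ[μ] ℝ), (∀ n, u n ∈ L) →
      (∀ ε : ℝ, 0 < ε → ∃ N : ℕ, ∀ m ≥ N, ∀ n ≥ N, nrm (u m - u n) < ε) →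
      ∃ f ∈ L, ∀ ε : ℝ, 0 < ε → ∃ N : ℕ, ∀ n ≥ N, nrm (u n - f) < ε

/-- `L` is an admissible space: a linear subspace of `L^0` which is a Banach lattice
(for the a.s. order, with norm `nrm`) satisfying `L^∞ ⊆ L ⊆ L^1`. -/
structure IsAdmissible {μ : Measure Ω} (L : Set (Ω →ₘ[μ] ℝ)) (nrm : (Ω →ₘ[μ] ℝ) → ℝ) : Prop where
  zero_mem : (0 : Ω →ₘ[μ] ℝ) ∈ L
  add_mem : ∀ f ∈ L, ∀ g ∈ L, f + g ∈ L
  smul_mem : ∀ (c : ℝ), ∀ f ∈ L, c • f ∈ L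
  sup_mem : ∀ f ∈ L, ∀ g ∈ L, f ⊔ g ∈ L
  inf_mem : ∀ f ∈ L, ∀ g ∈ L, f ⊓ g ∈ L
  linfty_subset : ∀ f, EssBdd f → f ∈ L
  subset_lone : ∀ f ∈ L, Integrable f μ
  banach : IsBLNorm L nrm

variable {d : ℕ}

/-- The product space `X = X_1 × ⋯ × X_d`. -/
def prodSet {μ : Measure Ω} (Li : Fin d → Set (Ω →ₘ[μ] ℝ)) : Set (Fin d → (Ω →ₘ[μ] ℝ)) :=
  {X | ∀ i, X i ∈ Li i}

/-- The vector pairing `E[⟨X,Z⟩] = ∑ i, E[X_i Z_i]`. -/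
def pairing {μ : Measure Ω} (X Z : Fin d → (Ω →ₘ[μ] ℝ)) : ℝ := ∑ i, ip (X i) (Z i)

/-- The constant random vector associated with `m ∈ ℝ^d`. -/
def cvec (μ : Measure Ω) (m : Fin d → ℝ) : Fin d → (Ω →ₘ[μ] ℝ) :=
  fun i => (AEEqFun.const Ω (m i) : Ω →ₘ[μ] ℝ)

/-- The weak topology `σ(P, D)` on a set of random vectors `P` induced by the pairing
with elements of `D`. -/
def wtop {μ : Measure Ω} (P D : Set (Fin d → (Ω →ₘ[μ] ℝ))) : TopologicalSpace ↥P :=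
  TopologicalSpace.induced
    (fun X : ↥P => fun Z : ↥D => pairing (X : Fin d → (Ω →ₘ[μ] ℝ)) (Z : Fin d → (Ω →ₘ[μ] ℝ)))
    Pi.topologicalSpace

/-- The weak topology `σ(P, D)` on a set of random variables `P` induced by the pairing
with elements of `D`. -/
def wtop1 {μ : Measure Ω} (P D : Set (Ω →ₘ[μ] ℝ)) : TopologicalSpace ↥P :=
  TopologicalSpace.induced
    (fun U : ↥P => fun W : ↥D => ip (U : Ω →ₘ[μ] ℝ) (W : Ω →ₘ[μ] ℝ))
    Pi.topologicalSpace

/-- An admissible impact map `S : X → E`. -/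
structure IsAdmissibleImpact {μ : Measure Ω} (XX XX' : Set (Fin d → (Ω →ₘ[μ] ℝ)))
    (EE EE' : Set (Ω →ₘ[μ] ℝ)) (S : (Fin d → (Ω →ₘ[μ] ℝ)) → (Ω →ₘ[μ] ℝ)) : Prop where
  mapsTo : ∀ X ∈ XX, S X ∈ EE
  nonconst : ∃ X ∈ XX, ∃ Y ∈ XX, S X ≠ S Y
  normalized : S 0 = 0
  mono : ∀ X ∈ XX, ∀ Y ∈ XX, X ≤ Y → S X ≤ S Y
  concave : ∀ X ∈ XX, ∀ Y ∈ XX, ∀ t : ℝ, 0 ≤ t → t ≤ 1 →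
      t • S X + (1 - t) • S Y ≤ S (t • X + (1 - t) • Y)
  usc : ∀ W ∈ EE', (0 : Ω →ₘ[μ] ℝ) ≤ W →
      @UpperSemicontinuous (↥XX) ℝ (wtop XX XX') _
        (fun X : ↥XX => ∫ ω, S (X : Fin d → (Ω →ₘ[μ] ℝ)) ω * W ω ∂μ)

/-- An admissible acceptance set `A ⊆ E` (relative to the impact map `S`). -/
structure IsAdmissibleAcceptance {μ : Measure Ω} (XX : Set (Fin d → (Ω →ₘ[μ] ℝ)))
    (EE EE' : Set (Ω →ₘ[μ] ℝ)) (S : (Fin d → (Ω →ₘ[μ] ℝ)) → (Ω →ₘ[μ] ℝ))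
    (A : Set (Ω →ₘ[μ] ℝ)) : Prop where
  subset : A ⊆ EE
  preimage_nonempty : ∃ X ∈ XX, S X ∈ A
  preimage_proper : ∃ X ∈ XX, S X ∉ A
  zero_mem : (0 : Ω →ₘ[μ] ℝ) ∈ A
  mono : ∀ U ∈ A, ∀ V ∈ EE, (0 : Ω →ₘ[μ] ℝ) ≤ V → U + V ∈ A
  convex : ∀ U ∈ A, ∀ V ∈ A, ∀ t : ℝ, 0 ≤ t → t ≤ 1 → t • U + (1 - t) • V ∈ A
  closed : @IsClosed (↥EE) (wtop1 EE EE') {U : ↥EE | (U : Ω →ₘ[μ] ℝ) ∈ A}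

/-- The systemic acceptance set `S⁻¹(A) = {X ∈ X : S(X) ∈ A}`. -/
def sysAcc {μ : Measure Ω} (XX : Set (Fin d → (Ω →ₘ[μ] ℝ)))
    (S : (Fin d → (Ω →ₘ[μ] ℝ)) → (Ω →ₘ[μ] ℝ)) (A : Set (Ω →ₘ[μ] ℝ)) :
    Set (Fin d → (Ω →ₘ[μ] ℝ)) :=
  {X ∈ XX | S X ∈ A}

/-- The "first allocate, then aggregate" systemic risk measure `ρ`. -/
def rho (μ : Measure Ω) (S : (Fin d → (Ω →ₘ[μ] ℝ)) → (Ω →ₘ[μ] ℝ)) (A : Set (Ω →ₘ[μ] ℝ))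
    (X : Fin d → (Ω →ₘ[μ] ℝ)) : EReal :=
  ⨅ m ∈ {m : Fin d → ℝ | S (X + cvec μ m) ∈ A}, ((∑ i, m i : ℝ) : EReal)

/-- The (lower) support function of a set of random vectors. -/
def suppV {μ : Measure Ω} (B : Set (Fin d → (Ω →ₘ[μ] ℝ))) (Z : Fin d → (Ω →ₘ[μ] ℝ)) : EReal :=
  ⨅ X ∈ B, ((pairing X Z : ℝ) : EReal)

/-- The barrier cone of a set of random vectors, inside the dual set `D`. -/
def barrV {μ : Measure Ω} (B D : Set (Fin d → (Ω →ₘ[μ] ℝ))) : Set (Fin d → (Ω →ₘ[μ] ℝ)) :=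
  {Z ∈ D | ⊥ < suppV B Z}

/-- The (lower) support function of a set of random variables. -/
def suppS {μ : Measure Ω} (A : Set (Ω →ₘ[μ] ℝ)) (W : Ω →ₘ[μ] ℝ) : EReal :=
  ⨅ U ∈ A, ((ip U W : ℝ) : EReal)

/-- The barrier cone of a set of random variables, inside the dual set `D`. -/
def barrS {μ : Measure Ω} (A D : Set (Ω →ₘ[μ] ℝ)) : Set (Ω →ₘ[μ] ℝ) :=
  {W ∈ D | ⊥ < suppS A W}

/-- The generic penalty function with dual variables `W` ranging over `K`. -/
def penalty {μ : Measure Ω} (XX : Set (Fin d → (Ω →ₘ[μ] ℝ)))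
    (A : Set (Ω →ₘ[μ] ℝ)) (S : (Fin d → (Ω →ₘ[μ] ℝ)) → (Ω →ₘ[μ] ℝ))
    (K : Set (Ω →ₘ[μ] ℝ)) (Z : Fin d → (Ω →ₘ[μ] ℝ)) : EReal :=
  ⨆ W ∈ K, (suppS A W +
    ⨅ X ∈ XX, ((pairing X Z - ∫ ω, S X ω * W ω ∂μ : ℝ) : EReal))

/-- a.s. strictly positive random variables. -/
def strictPos (μ : Measure Ω) : Set (Ω →ₘ[μ] ℝ) := {W | ∀ᵐ ω ∂μ, 0 < W ω}

/-- The penalty function `α`. -/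
def alpha {μ : Measure Ω} (XX : Set (Fin d → (Ω →ₘ[μ] ℝ))) (EE' : Set (Ω →ₘ[μ] ℝ))
    (A : Set (Ω →ₘ[μ] ℝ)) (S : (Fin d → (Ω →ₘ[μ] ℝ)) → (Ω →ₘ[μ] ℝ)) :
    (Fin d → (Ω →ₘ[μ] ℝ)) → EReal :=
  penalty XX A S (barrS A EE')

/-- The penalty function `α⁺`. -/
def alphaPlus {μ : Measure Ω} (XX : Set (Fin d → (Ω →ₘ[μ] ℝ))) (EE' : Set (Ω →ₘ[μ] ℝ))
    (A : Set (Ω →ₘ[μ] ℝ)) (S : (Fin d → (Ω →ₘ[μ] ℝ)) → (Ω →ₘ[μ] ℝ)) :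
    (Fin d → (Ω →ₘ[μ] ℝ)) → EReal :=
  penalty XX A S (barrS A EE' ∩ (strictPos μ ∪ {0}))

/-- a.s. strictly positive random vectors. -/
def strictPosV (μ : Measure Ω) (d : ℕ) : Set (Fin d → (Ω →ₘ[μ] ℝ)) :=
  {Z | ∀ i, ∀ᵐ ω ∂μ, 0 < Z i ω}

/-- The set `C` of nonnegative dual vectors with all components of expectation one. -/
def Cset {μ : Measure Ω} (XX' : Set (Fin d → (Ω →ₘ[μ] ℝ))) : Set (Fin d → (Ω →ₘ[μ] ℝ)) :=
  {Z ∈ XX' | (∀ i, (0 : Ω →ₘ[μ] ℝ) ≤ Z i) ∧ ∀ i, (∫ ω, Z i ω ∂μ) = 1}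

/-- A map with values in `[−∞,∞]` is proper on `P` if it never attains `−∞` on `P`
and is finite somewhere on `P`. -/
def ProperOn {β : Type*} (P : Set β) (f : β → EReal) : Prop :=
  (∀ x ∈ P, f x ≠ ⊥) ∧ ∃ x ∈ P, f x ≠ ⊤

/-- The positive part of an extended real number, as an extended nonnegative real. -/
def epos (x : EReal) : ℝ≥0∞ := if x = ⊤ then ⊤ else ENNReal.ofReal x.toReal

/-- The integral of an extended-real-valued function. -/
def eintegral (μ : Measure Ω) (g : Ω → EReal) : EReal :=
  ((∫⁻ ω, epos (g ω) ∂μ : ℝ≥0∞) : EReal) - ((∫⁻ ω, epos (-(g ω)) ∂μ : ℝ≥0∞) : EReal)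

/-!
With `S(X) = ∑ᵢ Xᵢ` on `X = Eᵈ`, the map `X ↦ E[⟨X,Z⟩] − E[S(X)W] = ∑ᵢ E[Xᵢ(Zᵢ − W)]` is linear,
so its infimum over `X` is `0` if `Zᵢ = W` for every `i` and `−∞` otherwise: bounded sign
functions separate distinct elements of `E'`. Hence `α(Z) = σ_A(W)` when every component of `Z`
equals `W`, and `α(Z) = −∞` when `Z` has two distinct components. The support function of
`S⁻¹(A)` shows the same dichotomy: if all `Zᵢ = W` then `E[⟨X,Z⟩] = E[S(X)W]` and `S` maps
`S⁻¹(A)` onto `A` (through vectors with a single nonzero component), while if `Zᵢ ≠ Zⱼ` then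
`S⁻¹(A)` contains the ray through `V eᵢ − V eⱼ`, on which the pairing with `Z` is negative.
-/

lemma _root_.Real.measurable_sign : Measurable Real.sign :=
  Measurable.ite measurableSet_Iio measurable_const
    (Measurable.ite measurableSet_Ioi measurable_const measurable_const)

lemma _root_.EReal.iInf_eq_bot_of_neg_ray {M : Type*} [SMul ℝ M] {P : Set M} {f : M → ℝ} {x : M}
    (hP : ∀ t : ℝ, 0 ≤ t → t • x ∈ P) (hf : ∀ t : ℝ, 0 ≤ t → f (t • x) = t * f x)
    (hx : f x < 0) : ⨅ y ∈ P, (f y : EReal) = ⊥ := by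
  refine (EReal.eq_bot_iff_forall_lt _).mpr fun r => ?_
  have hfx : -f x ≠ 0 := by linarith
  set t := (|r| + 1) / -f x
  have ht : 0 ≤ t := div_nonneg (by positivity) (by linarith)
  have hft : f (t • x) = -(|r| + 1) := by
    rw [hf t ht, div_mul_eq_mul_div, div_eq_iff hfx]
    ring
  calc ⨅ y ∈ P, (f y : EReal) ≤ (f (t • x) : EReal) := iInf₂_le _ (hP t ht)
    _ < r := EReal.coe_lt_coe_iff.mpr (by rw [hft]; linarith [neg_abs_le r])

section Pairing

variable {μ : Measure Ω}

lemma ip_smul_left (c : ℝ) (U W : Ω →ₘ[μ] ℝ) : ip (c • U) W = c * ip U W := by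
  unfold ip
  rw [← integral_const_mul]
  refine integral_congr_ae ?_
  filter_upwards [AEEqFun.coeFn_smul c U] with ω h
  simp [h, mul_assoc]

lemma ip_zero_left (W : Ω →ₘ[μ] ℝ) : ip 0 W = 0 := by
  simpa using ip_smul_left 0 (0 : Ω →ₘ[μ] ℝ) W

lemma ip_sub_left {U U' W : Ω →ₘ[μ] ℝ} (hU : Integrable (fun ω => U ω * W ω) μ)
    (hU' : Integrable (fun ω => U' ω * W ω) μ) : ip (U - U') W = ip U W - ip U' W := by
  unfold ip
  rw [← integral_sub hU hU']
  refine integral_congr_ae ?_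
  filter_upwards [AEEqFun.coeFn_sub U U'] with ω h
  simp [h, sub_mul]

lemma ip_sum_left {ι : Type*} (s : Finset ι) (U : ι → Ω →ₘ[μ] ℝ) (W : Ω →ₘ[μ] ℝ)
    (hU : ∀ i ∈ s, Integrable (fun ω => U i ω * W ω) μ) :
    ip (∑ i ∈ s, U i) W = ∑ i ∈ s, ip (U i) W := by
  unfold ip
  rw [← integral_finsetSum s hU]
  refine integral_congr_ae ?_
  filter_upwards [AEEqFun.coeFn_fun_finsetSum s U] with ω h
  simp [h, Finset.sum_mul]

lemma pairing_smul_left (t : ℝ) (X Z : Fin d → Ω →ₘ[μ] ℝ) :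
    pairing (t • X) Z = t * pairing X Z := by
  simp only [pairing, Finset.mul_sum, Pi.smul_apply, ip_smul_left]

lemma pairing_sub_left {X Y Z : Fin d → Ω →ₘ[μ] ℝ}
    (hX : ∀ i, Integrable (fun ω => X i ω * Z i ω) μ)
    (hY : ∀ i, Integrable (fun ω => Y i ω * Z i ω) μ) :
    pairing (X - Y) Z = pairing X Z - pairing Y Z := by
  simp only [pairing, ← Finset.sum_sub_distrib, Pi.sub_apply, ip_sub_left (hX _) (hY _)]

lemma pairing_single_left (j : Fin d) (U : Ω →ₘ[μ] ℝ)
    (Z : Fin d → Ω →ₘ[μ] ℝ) : pairing (Pi.single j U) Z = ip U (Z j) := by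
  rw [pairing, Finset.sum_eq_single j (fun i _ hi => by rw [Pi.single_eq_of_ne hi, ip_zero_left])
    (fun h => absurd (Finset.mem_univ j) h), Pi.single_eq_same]

lemma pairing_const_right {X : Fin d → Ω →ₘ[μ] ℝ} {W : Ω →ₘ[μ] ℝ}
    (hX : ∀ i, Integrable (fun ω => X i ω * W ω) μ) :
    pairing X (fun _ => W) = ip (∑ i, X i) W :=
  (ip_sum_left _ X W fun i _ => hX i).symm

end Pairing

lemma exists_mem_ip_lt_of_ne {μ : Measure Ω} {EE : Set (Ω →ₘ[μ] ℝ)}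
    (hbdd : ∀ f, EssBdd f → f ∈ EE) {W₁ W₂ : Ω →ₘ[μ] ℝ}
    (h₁ : W₁ ∈ kdual EE) (h₂ : W₂ ∈ kdual EE) (hne : W₁ ≠ W₂) :
    ∃ V ∈ EE, ip V W₁ < ip V W₂ := by
  set V := AEEqFun.compMeasurable Real.sign Real.measurable_sign (W₂ - W₁)
  have hVae : V =ᵐ[μ] Real.sign ∘ ⇑(W₂ - W₁) :=
    AEEqFun.coeFn_compMeasurable Real.sign Real.measurable_sign (W₂ - W₁)
  have hV : V ∈ EE := hbdd V ⟨1, by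
    filter_upwards [hVae] with ω h
    rw [h, Function.comp_apply]
    rcases Real.sign_apply_eq ((W₂ - W₁) ω) with hs | hs | hs <;> simp [hs]⟩
  set g : Ω → ℝ := fun ω => Real.sign ((W₂ - W₁) ω) * (W₂ - W₁) ω
  have hg : (fun ω => V ω * W₂ ω - V ω * W₁ ω) =ᵐ[μ] g := by
    filter_upwards [hVae, AEEqFun.coeFn_sub W₂ W₁] with ω hV hs
    simp only [g, hV, Function.comp_apply, hs, Pi.sub_apply, mul_sub]
  have hg_int : Integrable g μ := ((h₂ V hV).sub (h₁ V hV)).congr hg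
  have hg_pos : 0 < ∫ ω, g ω ∂μ := by
    refine lt_of_le_of_ne (integral_nonneg fun ω => Real.sign_mul_nonneg _) fun h0 => hne ?_
    rw [eq_comm, integral_eq_zero_iff_of_nonneg (fun ω => Real.sign_mul_nonneg _) hg_int] at h0
    refine AEEqFun.ext ?_
    filter_upwards [h0, AEEqFun.coeFn_sub W₂ W₁] with ω h hs
    by_contra hω
    have hne' : (W₂ - W₁) ω ≠ 0 := by rw [hs]; exact sub_ne_zero.mpr (Ne.symm hω)
    have := Real.sign_mul_pos_of_ne_zero _ hne'
    simp only [Pi.zero_apply] at h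
    linarith
  refine ⟨V, hV, ?_⟩
  have : ip V W₂ - ip V W₁ = ∫ ω, g ω ∂μ := by
    rw [ip, ip, ← integral_sub (h₂ V hV) (h₁ V hV)]
    exact integral_congr_ae hg
  linarith

lemma sysAcc_congr {μ : Measure Ω} {XX : Set (Fin d → Ω →ₘ[μ] ℝ)}
    {S S' : (Fin d → Ω →ₘ[μ] ℝ) → Ω →ₘ[μ] ℝ} (h : ∀ X ∈ XX, S X = S' X)
    (A : Set (Ω →ₘ[μ] ℝ)) : sysAcc XX S A = sysAcc XX S' A :=
  Set.ext fun X => and_congr_right fun hX => by rw [h X hX]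

lemma alpha_apply {μ : Measure Ω} (XX : Set (Fin d → Ω →ₘ[μ] ℝ)) (EE' A : Set (Ω →ₘ[μ] ℝ))
    (S : (Fin d → Ω →ₘ[μ] ℝ) → Ω →ₘ[μ] ℝ) (Z : Fin d → Ω →ₘ[μ] ℝ) :
    alpha XX EE' A S Z =
      ⨆ W ∈ barrS A EE', (suppS A W + ⨅ X ∈ XX, ((pairing X Z - ip (S X) W : ℝ) : EReal)) :=
  rfl

lemma alpha_congr {μ : Measure Ω} {XX : Set (Fin d → Ω →ₘ[μ] ℝ)}
    {S S' : (Fin d → Ω →ₘ[μ] ℝ) → Ω →ₘ[μ] ℝ} (h : ∀ X ∈ XX, S X = S' X)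
    (EE' A : Set (Ω →ₘ[μ] ℝ)) : alpha XX EE' A S = alpha XX EE' A S' := by
  funext Z
  simp only [alpha_apply]
  refine iSup_congr fun W => iSup_congr fun _ => congrArg _ ?_
  exact iInf_congr fun X => iInf_congr fun hX => by rw [h X hX]

section SumAggregation

variable {μ : Measure Ω} {EE : Set (Ω →ₘ[μ] ℝ)} {nrmE : (Ω →ₘ[μ] ℝ) → ℝ}

lemma IsAdmissible.sub_mem (hE : IsAdmissible EE nrmE) {f g : Ω →ₘ[μ] ℝ} (hf : f ∈ EE)
    (hg : g ∈ EE) : f - g ∈ EE := by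
  simpa [sub_eq_add_neg] using hE.add_mem f hf _ (hE.smul_mem (-1) g hg)

lemma IsAdmissible.smul_mem_prodSet (hE : IsAdmissible EE nrmE) {X : Fin d → Ω →ₘ[μ] ℝ}
    (hX : X ∈ prodSet fun _ => EE) (t : ℝ) : t • X ∈ prodSet fun _ => EE :=
  fun i => hE.smul_mem t _ (hX i)

lemma IsAdmissible.single_mem_prodSet (hE : IsAdmissible EE nrmE) {U : Ω →ₘ[μ] ℝ}
    (hU : U ∈ EE) (j : Fin d) : Pi.single j U ∈ prodSet fun _ => EE := by
  intro i
  rcases eq_or_ne i j with rfl | hij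
  · simpa using hU
  · simpa [Pi.single_eq_of_ne hij] using hE.zero_mem

lemma iInf_pairing_const_sub_ip_sum_eq_zero (hE : IsAdmissible EE nrmE) {W : Ω →ₘ[μ] ℝ}
    (hW : W ∈ kdual EE) :
    ⨅ X ∈ prodSet (fun _ : Fin d => EE), ((pairing X (fun _ => W) - ip (∑ i, X i) W : ℝ) : EReal)
      = 0 := by
  have hzero : ∀ X ∈ prodSet (fun _ : Fin d => EE),
      ((pairing X (fun _ => W) - ip (∑ i, X i) W : ℝ) : EReal) = 0 := fun X hX => by
    rw [sub_eq_zero.mpr (pairing_const_right fun i => hW _ (hX i)), EReal.coe_zero]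
  have h0 : (0 : Fin d → Ω →ₘ[μ] ℝ) ∈ prodSet fun _ => EE := fun _ => hE.zero_mem
  exact le_antisymm ((iInf₂_le 0 h0).trans (hzero 0 h0).le) (le_iInf₂ fun X hX => (hzero X hX).ge)

lemma iInf_pairing_sub_ip_sum_eq_bot (hE : IsAdmissible EE nrmE) {W : Ω →ₘ[μ] ℝ}
    (hW : W ∈ kdual EE) {Z : Fin d → Ω →ₘ[μ] ℝ} (hZ : Z ∈ prodSet fun _ => kdual EE) {i : Fin d}
    (hi : Z i ≠ W) :
    ⨅ X ∈ prodSet (fun _ : Fin d => EE), ((pairing X Z - ip (∑ i, X i) W : ℝ) : EReal) = ⊥ := by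
  obtain ⟨V, hV, hlt⟩ := exists_mem_ip_lt_of_ne hE.linfty_subset (hZ i) hW hi
  refine EReal.iInf_eq_bot_of_neg_ray
    (fun t _ => hE.smul_mem_prodSet (hE.single_mem_prodSet hV i) t) (fun t _ => ?_) ?_
  · simp only [pairing_smul_left, Pi.smul_apply]
    rw [← Finset.smul_sum, ip_smul_left, mul_sub]
  · rw [pairing_single_left, Finset.sum_pi_single']
    simpa using hlt

lemma suppV_sysAcc_sum_const [NeZero d] (hE : IsAdmissible EE nrmE) {A : Set (Ω →ₘ[μ] ℝ)}
    (hAE : A ⊆ EE) {W : Ω →ₘ[μ] ℝ} (hW : W ∈ kdual EE) :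
    suppV (sysAcc (prodSet fun _ : Fin d => EE) (fun X => ∑ i, X i) A) (fun _ => W)
      = suppS A W := by
  apply le_antisymm
  · refine le_iInf₂ fun U hU => iInf₂_le_of_le (Pi.single 0 U)
      ⟨hE.single_mem_prodSet (hAE hU) 0, by simpa using hU⟩ ?_
    rw [pairing_single_left]
  · refine le_iInf₂ fun X hX => iInf₂_le_of_le _ hX.2 ?_
    rw [pairing_const_right fun i => hW _ (hX.1 i)]

lemma suppV_sysAcc_sum_eq_bot (hE : IsAdmissible EE nrmE) {A : Set (Ω →ₘ[μ] ℝ)} (hA0 : 0 ∈ A)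
    {Z : Fin d → Ω →ₘ[μ] ℝ} (hZ : Z ∈ prodSet fun _ => kdual EE) {i j : Fin d}
    (hij : Z i ≠ Z j) :
    suppV (sysAcc (prodSet fun _ : Fin d => EE) (fun X => ∑ i, X i) A) Z = ⊥ := by
  obtain ⟨V, hV, hlt⟩ := exists_mem_ip_lt_of_ne hE.linfty_subset (hZ i) (hZ j) hij
  have hVi := hE.single_mem_prodSet hV i
  have hVj := hE.single_mem_prodSet hV j
  have hsum : ∑ k, (Pi.single i V - Pi.single j V : Fin d → Ω →ₘ[μ] ℝ) k = 0 := by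
    simp [Finset.sum_sub_distrib]
  refine EReal.iInf_eq_bot_of_neg_ray (x := Pi.single i V - Pi.single j V)
    (fun t _ => ⟨hE.smul_mem_prodSet (fun k => hE.sub_mem (hVi k) (hVj k)) t, ?_⟩)
    (fun t _ => pairing_smul_left t _ Z) ?_
  · simpa [← Finset.smul_sum, hsum] using hA0
  · rw [pairing_sub_left (fun k => hZ k _ (hVi k)) (fun k => hZ k _ (hVj k)),
      pairing_single_left, pairing_single_left]
    linarith

lemma alpha_sum_const [NeZero d] (hE : IsAdmissible EE nrmE) {A : Set (Ω →ₘ[μ] ℝ)}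
    {W : Ω →ₘ[μ] ℝ} (hW : W ∈ kdual EE) :
    alpha (prodSet fun _ : Fin d => EE) (kdual EE) A (fun X => ∑ i, X i) (fun _ => W)
      = suppS A W := by
  rw [alpha_apply]
  apply le_antisymm
  · refine iSup₂_le fun W' hW' => ?_
    rcases eq_or_ne W W' with rfl | hne
    · rw [iInf_pairing_const_sub_ip_sum_eq_zero hE hW, add_zero]
    · rw [iInf_pairing_sub_ip_sum_eq_bot hE hW'.1 (fun _ => hW) (i := 0) hne, EReal.add_bot]
      exact bot_le
  · by_cases hWA : W ∈ barrS A (kdual EE)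
    · refine le_iSup₂_of_le W hWA ?_
      rw [iInf_pairing_const_sub_ip_sum_eq_zero hE hW, add_zero]
    · rw [not_bot_lt_iff.mp fun h => hWA ⟨hW, h⟩]
      exact bot_le

lemma alpha_sum_eq_bot (hE : IsAdmissible EE nrmE) {A : Set (Ω →ₘ[μ] ℝ)}
    {Z : Fin d → Ω →ₘ[μ] ℝ} (hZ : Z ∈ prodSet fun _ => kdual EE) {i j : Fin d}
    (hij : Z i ≠ Z j) :
    alpha (prodSet fun _ : Fin d => EE) (kdual EE) A (fun X => ∑ i, X i) Z = ⊥ := by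
  rw [alpha_apply]
  refine le_bot_iff.mp (iSup₂_le fun W hW => ?_)
  obtain ⟨k, hk⟩ : ∃ k, Z k ≠ W := by
    by_contra! h
    exact hij ((h i).trans (h j).symm)
  rw [iInf_pairing_sub_ip_sum_eq_bot hE hW.1 hZ hk, EReal.add_bot]

end SumAggregation

theorem statement12_general {μ : Measure Ω} {d : ℕ}
    (Li : Fin d → Set (Ω →ₘ[μ] ℝ))
    (EE : Set (Ω →ₘ[μ] ℝ)) (nrmE : (Ω →ₘ[μ] ℝ) → ℝ)
    (S : (Fin d → (Ω →ₘ[μ] ℝ)) → (Ω →ₘ[μ] ℝ)) (A : Set (Ω →ₘ[μ] ℝ))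
    (hE : IsAdmissible EE nrmE)
    (hS : IsAdmissibleImpact (prodSet Li) (prodSet fun i => kdual (Li i)) EE (kdual EE) S)
    (hA : IsAdmissibleAcceptance (prodSet Li) EE (kdual EE) S A)
    (hXiE : ∀ i, Li i = EE)
    (hSsum : ∀ X ∈ prodSet Li, S X = ∑ i, X i) :
    ∀ Z ∈ prodSet fun i => kdual (Li i),
      alpha (prodSet Li) (kdual EE) A S Z = suppV (sysAcc (prodSet Li) S A) Z := by
  obtain rfl : Li = fun _ => EE := funext hXiE
  have : NeZero d := ⟨by
    rintro rfl
    obtain ⟨X, -, Y, -, hXY⟩ := hS.nonconst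
    exact hXY (congrArg S (Subsingleton.elim X Y))⟩
  intro Z hZ
  rw [alpha_congr hSsum, sysAcc_congr hSsum]
  by_cases hconst : ∀ i, Z i = Z 0
  · rw [show Z = fun _ => Z 0 from funext hconst, alpha_sum_const hE (hZ 0),
      suppV_sysAcc_sum_const hE hA.subset (hZ 0)]
  · obtain ⟨i, hi⟩ := not_forall.mp hconst
    rw [alpha_sum_eq_bot hE hZ hi, suppV_sysAcc_sum_eq_bot hE hA.zero_mem hZ hi]

/-- for the consolidated-balance-sheet aggregation `S(X) = ∑ᵢ Xᵢ` one has
`α = σ_{S⁻¹(A)}`. -/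
theorem statement12 {μ : Measure Ω} [IsProbabilityMeasure μ] {d : ℕ}
    (Li : Fin d → Set (Ω →ₘ[μ] ℝ)) (nrmX : Fin d → ((Ω →ₘ[μ] ℝ) → ℝ))
    (EE : Set (Ω →ₘ[μ] ℝ)) (nrmE : (Ω →ₘ[μ] ℝ) → ℝ)
    (S : (Fin d → (Ω →ₘ[μ] ℝ)) → (Ω →ₘ[μ] ℝ)) (A : Set (Ω →ₘ[μ] ℝ))
    (hLi : ∀ i, IsAdmissible (Li i) (nrmX i))
    (hE : IsAdmissible EE nrmE)
    (hS : IsAdmissibleImpact (prodSet Li) (prodSet fun i => kdual (Li i)) EE (kdual EE) S)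
    (hA : IsAdmissibleAcceptance (prodSet Li) EE (kdual EE) S A)
    (hXiE : ∀ i, Li i = EE)
    (hSsum : ∀ X ∈ prodSet Li, S X = ∑ i, X i) :
    ∀ Z ∈ prodSet fun i => kdual (Li i),
      alpha (prodSet Li) (kdual EE) A S Z = suppV (sysAcc (prodSet Li) S A) Z :=
  statement12_general Li EE nrmE S A hE hS hA hXiE hSsum

end SystemicRisk
end
end

section
/- Let u : ℝ → ℝ be a nonconstant, concave, increasing function and let u_0 ∈ ℝ satisfy u(x) > u_0 for some x ∈ ℝ. Define ρ_u : L^∞ → [−∞,∞] by ρ_u(X) := inf{m ∈ ℝ : E[u(X+m)] ≥ u_0}. Then ρ_u is convex and lower semicontinuous with respect to the weak topology σ(L^∞,L^1), and for every X ∈ L^∞, ρ_u(X) = sup over probability measures Q absolutely continuous with respect to P of { E_Q[−X] + sup_{λ>0} (1/λ)·( u_0 + E[ u•(λ · dQ/dP) ] ) }, where u•(z) := inf_{x ∈ ℝ} (xz − u(x)) is the concave conjugate of u. -/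
/-!
For bounded `X` the map `m ↦ E[u(X + m)]` is monotone and concave, hence continuous, and it takes
values on both sides of `u₀` (a nonconstant concave increasing `u` is unbounded below). So
`ρ_u(X)` is the threshold `m*` with `E[u(X + m*)] = u₀`, and `ρ_u(X) ≤ r ↔ E[u(X + r)] ≥ u₀`;
convexity of `ρ_u` is then the concavity of `u`.

Integrating the Fenchel–Young inequality `u•(z) ≤ x z - u(x)` at `x = X + m`, `z = λ dQ/dP` gives
`E_Q[-X] + (u₀ + E[u•(λ dQ/dP)]) / λ ≤ m` for every acceptable `m`. Equality holds when `λ dQ/dP`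
is the left derivative of `u` at `X + m*`, a supergradient; it is bounded and not a.s. zero since
`u₀ < sup u`, so it normalizes to a density. Being a supremum of `σ(L^∞, L^1)`-continuous affine
functions, `ρ_u` is lower semicontinuous.
-/

open MeasureTheory Filter Set
open scoped ENNReal

noncomputable section

namespace SystemicRisk

variable {Ω : Type*} [MeasurableSpace Ω]

variable {d : ℕ}

/-- The concave conjugate `u•(z) = inf_x (xz − u(x))` of a utility function. -/
def uConj (u : ℝ → ℝ) (z : ℝ) : EReal :=
  ⨅ x : ℝ, ((x * z - u x : ℝ) : EReal)

/-- The utility-based (shortfall) risk measure `ρ_u`. -/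
def rhoU (μ : Measure Ω) (u : ℝ → ℝ) (u0 : ℝ) (X : Ω →ₘ[μ] ℝ) : EReal :=
  ⨅ m ∈ {m : ℝ | u0 ≤ ∫ ω, u (X ω + m) ∂μ}, ((m : ℝ) : EReal)

section LeftDeriv

variable {S : Set ℝ} {f : ℝ → ℝ} {x y : ℝ}

theorem _root_.ConcaveOn.leftDeriv_le_slope_of_mem_interior (hf : ConcaveOn ℝ S f) (hx : x ∈ S)
    (hy : y ∈ interior S) (hxy : x < y) : derivWithin f (Iio y) y ≤ slope f x y := by
  simpa [derivWithin.neg, slope_neg] using hf.neg.slope_le_leftDeriv_of_mem_interior hx hy hxy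

theorem _root_.ConcaveOn.slope_le_leftDeriv_of_mem_interior (hf : ConcaveOn ℝ S f)
    (hx : x ∈ interior S) (hy : y ∈ S) (hxy : x < y) :
    slope f x y ≤ derivWithin f (Iio x) x := by
  simpa [derivWithin.neg, slope_neg] using
    (hf.neg.leftDeriv_le_rightDeriv_of_mem_interior hx).trans
      (hf.neg.rightDeriv_le_slope_of_mem_interior hx hy hxy)

theorem _root_.ConcaveOn.antitoneOn_leftDeriv (hf : ConcaveOn ℝ S f) :
    AntitoneOn (fun x => derivWithin f (Iio x) x) (interior S) := fun x hx y hy hxy => by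
  simpa [derivWithin.neg] using hf.neg.monotoneOn_leftDeriv hx hy hxy

theorem _root_.ConcaveOn.le_add_leftDeriv_mul (hf : ConcaveOn ℝ S f) (hx : x ∈ interior S)
    (hy : y ∈ S) : f y ≤ f x + derivWithin f (Iio x) x * (y - x) := by
  rcases lt_trichotomy y x with hyx | rfl | hxy
  · have h := hf.leftDeriv_le_slope_of_mem_interior hy hx hyx
    rw [slope_def_field, le_div_iff₀ (sub_pos.2 hyx)] at h
    linarith
  · simp
  · have h := hf.slope_le_leftDeriv_of_mem_interior hx hy hxy
    rw [slope_def_field, div_le_iff₀ (sub_pos.2 hxy)] at h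
    linarith

end LeftDeriv

section Utility

variable {u : ℝ → ℝ}

theorem uConj_le (u : ℝ → ℝ) (z x : ℝ) : uConj u z ≤ ((x * z - u x : ℝ) : EReal) :=
  iInf_le _ x

theorem uConj_eq_of_le_add_mul {y z : ℝ} (h : ∀ x, u x ≤ u y + z * (x - y)) :
    uConj u z = ((y * z - u y : ℝ) : EReal) :=
  le_antisymm (uConj_le u z y) <| le_iInf fun x => EReal.coe_le_coe_iff.2 <| by
    linarith [h x]

theorem _root_.ConcaveOn.exists_lt_of_monotone (hc : ConcaveOn ℝ univ u) (hm : Monotone u)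
    (hnc : ∃ x y, u x ≠ u y) (c : ℝ) : ∃ t, u t < c := by
  obtain ⟨a, b, hab⟩ : ∃ a b, u a < u b := by
    obtain ⟨x, y, hxy⟩ := hnc
    rcases hxy.lt_or_gt with h | h
    exacts [⟨x, y, h⟩, ⟨y, x, h⟩]
  set D := derivWithin u (Iio a) a
  have hsup : ∀ t, u t ≤ u a + D * (t - a) := fun t =>
    hc.le_add_leftDeriv_mul (by simp) (mem_univ t)
  have hD : 0 < D := by
    have := hsup b
    have hba : 0 < b - a := sub_pos.2 (hm.reflect_lt hab)
    nlinarith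
  refine ⟨a - (|u a - c| + 1) / D, (hsup _).trans_lt ?_⟩
  rw [sub_sub_cancel_left, mul_neg, mul_div_cancel₀ _ hD.ne']
  linarith [le_abs_self (u a - c)]

end Utility

theorem _root_.Monotone.exists_eq_and_forall_le_iff {g : ℝ → ℝ} (hm : Monotone g)
    (hg : Continuous g) {a b c : ℝ} (ha : g a < c) (hb : c ≤ g b) :
    ∃ m, g m = c ∧ ∀ r, c ≤ g r ↔ m ≤ r := by
  set S := {r | c ≤ g r}
  have hbdd : BddBelow S :=
    ⟨a, fun r hr => le_of_not_gt fun hra => ((hm hra.le).trans_lt ha).not_ge hr⟩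
  have hmem : sInf S ∈ S := (isClosed_le continuous_const hg).csInf_mem ⟨b, hb⟩ hbdd
  have hiff : ∀ r, c ≤ g r ↔ sInf S ≤ r :=
    fun r => ⟨fun h => csInf_le hbdd h, fun h => hmem.trans (hm h)⟩
  have haS : a ≤ sInf S := le_of_not_ge fun h => ha.not_ge ((hiff a).2 h)
  obtain ⟨m, ⟨-, hmS⟩, hgm⟩ := intermediate_value_Icc haS hg.continuousOn ⟨ha.le, hmem⟩
  obtain rfl : m = sInf S := le_antisymm hmS ((hiff m).1 hgm.ge)
  exact ⟨_, hgm, hiff⟩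

section EIntegral

variable {μ : Measure Ω}

theorem epos_coe (r : ℝ) : epos (r : EReal) = ENNReal.ofReal r := by
  simp [epos]

theorem epos_mono : Monotone epos := by
  intro x y h
  unfold epos
  by_cases hy : y = ⊤
  · simp [hy]
  have hx : x ≠ ⊤ := ne_top_of_le_ne_top hy h
  rcases eq_or_ne x ⊥ with rfl | hx'
  · simp [hy]
  simpa [hx, hy] using ENNReal.ofReal_le_ofReal (EReal.toReal_le_toReal h hx' hy)

theorem eintegral_congr_ae {f g : Ω → EReal} (h : f =ᵐ[μ] g) :
    eintegral μ f = eintegral μ g := by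
  unfold eintegral
  congr 2 <;> exact lintegral_congr_ae (h.mono fun ω hω => by simp only [hω])

theorem eintegral_mono {f g : Ω → EReal} (h : ∀ ω, f ω ≤ g ω) :
    eintegral μ f ≤ eintegral μ g :=
  EReal.sub_le_sub
    (EReal.coe_ennreal_le_coe_ennreal_iff.2 (lintegral_mono fun ω => epos_mono (h ω)))
    (EReal.coe_ennreal_le_coe_ennreal_iff.2
      (lintegral_mono fun ω => epos_mono (EReal.neg_le_neg_iff.2 (h ω))))

theorem eintegral_coe {h : Ω → ℝ} (hh : Integrable h μ) :
    eintegral μ (fun ω => (h ω : EReal)) = ((∫ ω, h ω ∂μ : ℝ) : EReal) := by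
  have hcoe : ∀ g : Ω → ℝ, Integrable g μ →
      (((∫⁻ ω, ENNReal.ofReal (g ω) ∂μ) : ℝ≥0∞) : EReal)
        = ((∫⁻ ω, ENNReal.ofReal (g ω) ∂μ).toReal : EReal) := fun g hg => by
    rw [EReal.coe_ennreal_toReal hg.lintegral_lt_top.ne]
  simp_rw [eintegral, ← EReal.coe_neg, epos_coe]
  rw [hcoe h hh, hcoe (fun ω => -h ω) hh.neg,
    integral_eq_lintegral_pos_part_sub_lintegral_neg_part hh, EReal.coe_sub]

end EIntegral

section Shortfall

variable {μ : Measure Ω} {u : ℝ → ℝ} {u0 : ℝ}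

theorem EssBdd.add {X Y : Ω →ₘ[μ] ℝ} (hX : EssBdd X) (hY : EssBdd Y) : EssBdd (X + Y) := by
  obtain ⟨C, hC⟩ := hX
  obtain ⟨D, hD⟩ := hY
  refine ⟨C + D, ?_⟩
  filter_upwards [hC, hD, AEEqFun.coeFn_add X Y] with ω hCω hDω h
  rw [h, Pi.add_apply]
  exact (abs_add_le _ _).trans (add_le_add hCω hDω)

theorem EssBdd.smul {X : Ω →ₘ[μ] ℝ} (hX : EssBdd X) (a : ℝ) : EssBdd (a • X) := by
  obtain ⟨C, hC⟩ := hX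
  refine ⟨|a| * C, ?_⟩
  filter_upwards [hC, AEEqFun.coeFn_smul a X] with ω hCω h
  rw [h, Pi.smul_apply, smul_eq_mul, abs_mul]
  exact mul_le_mul_of_nonneg_left hCω (abs_nonneg a)

theorem _root_.Monotone.integrable_comp_add [IsFiniteMeasure μ] (hu : Monotone u)
    {X : Ω →ₘ[μ] ℝ} (hX : EssBdd X) (m : ℝ) : Integrable (fun ω => u (X ω + m)) μ := by
  obtain ⟨C, hC⟩ := hX
  refine Integrable.mono' (integrable_const (|u (-C + m)| + |u (C + m)|))
    (hu.measurable.comp (X.stronglyMeasurable.measurable.add_const m)).aestronglyMeasurable ?_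
  filter_upwards [hC] with ω hω
  obtain ⟨hlo, hhi⟩ := abs_le.1 hω
  have h1 := hu (show -C + m ≤ X ω + m by linarith)
  have h2 := hu (show X ω + m ≤ C + m by linarith)
  rw [Real.norm_eq_abs, abs_le]
  constructor <;> linarith [neg_abs_le (u (-C + m)), le_abs_self (u (C + m)),
    abs_nonneg (u (-C + m)), abs_nonneg (u (C + m))]

theorem _root_.ConcaveOn.mul_integral_add_mul_integral_le (hu : ConcaveOn ℝ univ u)
    {f g : Ω → ℝ} (hf : Integrable (fun ω => u (f ω)) μ) (hg : Integrable (fun ω => u (g ω)) μ)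
    {a b : ℝ} (ha : 0 ≤ a) (hb : 0 ≤ b) (hab : a + b = 1)
    (hfg : Integrable (fun ω => u (a * f ω + b * g ω)) μ) :
    a * ∫ ω, u (f ω) ∂μ + b * ∫ ω, u (g ω) ∂μ ≤ ∫ ω, u (a * f ω + b * g ω) ∂μ := by
  rw [← integral_const_mul, ← integral_const_mul,
    ← integral_add (hf.const_mul a) (hg.const_mul b)]
  exact integral_mono ((hf.const_mul a).add (hg.const_mul b)) hfg
    fun ω => hu.2 (mem_univ _) (mem_univ _) ha hb hab

theorem concaveOn_integral_comp_add [IsFiniteMeasure μ] (hc : ConcaveOn ℝ univ u)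
    (hm : Monotone u) {X : Ω →ₘ[μ] ℝ} (hX : EssBdd X) :
    ConcaveOn ℝ univ fun m => ∫ ω, u (X ω + m) ∂μ := by
  refine ⟨convex_univ, fun m _ n _ a b ha hb hab => ?_⟩
  have hshift : ∀ ω, a * (X ω + m) + b * (X ω + n) = X ω + (a * m + b * n) := fun ω => by
    linear_combination X ω * hab
  have hint : Integrable (fun ω => u (a * (X ω + m) + b * (X ω + n))) μ := by
    simpa only [hshift] using hm.integrable_comp_add hX (a * m + b * n)
  have key := hc.mul_integral_add_mul_integral_le (hm.integrable_comp_add hX m)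
    (hm.integrable_comp_add hX n) ha hb hab hint
  simpa only [hshift, smul_eq_mul] using key

theorem exists_integral_comp_add_eq [IsProbabilityMeasure μ] (hc : ConcaveOn ℝ univ u)
    (hm : Monotone u) (hnc : ∃ x y, u x ≠ u y) (hu0 : ∃ x, u0 < u x)
    {X : Ω →ₘ[μ] ℝ} (hX : EssBdd X) :
    ∃ m, ∫ ω, u (X ω + m) ∂μ = u0 ∧ ∀ r, u0 ≤ ∫ ω, u (X ω + r) ∂μ ↔ m ≤ r := by
  have hmono : Monotone fun m => ∫ ω, u (X ω + m) ∂μ := fun m n hmn =>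
    integral_mono (hm.integrable_comp_add hX m) (hm.integrable_comp_add hX n)
      fun ω => hm (by linarith)
  have hcont : Continuous fun m => ∫ ω, u (X ω + m) ∂μ :=
    continuousOn_univ.1 ((concaveOn_integral_comp_add hc hm hX).continuousOn isOpen_univ)
  obtain ⟨C, hC⟩ := hX
  obtain ⟨x0, hx0⟩ := hu0
  obtain ⟨t, ht⟩ := hc.exists_lt_of_monotone hm hnc u0
  have hlow : u x0 ≤ ∫ ω, u (X ω + (x0 + C)) ∂μ := by
    simpa using integral_mono_ae (integrable_const (u x0)) (hm.integrable_comp_add ⟨C, hC⟩ _)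
      (hC.mono fun ω hω => hm (by linarith [(abs_le.1 hω).1]))
  have hhigh : ∫ ω, u (X ω + (t - C)) ∂μ ≤ u t := by
    simpa using integral_mono_ae (hm.integrable_comp_add ⟨C, hC⟩ _) (integrable_const (u t))
      (hC.mono fun ω hω => hm (by linarith [(abs_le.1 hω).2]))
  exact hmono.exists_eq_and_forall_le_iff hcont (hhigh.trans_lt ht) (hx0.le.trans hlow)

theorem rhoU_eq_of_forall_le_iff {X : Ω →ₘ[μ] ℝ} {m : ℝ}
    (h : ∀ r, u0 ≤ ∫ ω, u (X ω + r) ∂μ ↔ m ≤ r) : rhoU μ u u0 X = m :=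
  le_antisymm (iInf₂_le m ((h m).2 le_rfl))
    (le_iInf₂ fun r hr => EReal.coe_le_coe_iff.2 ((h r).1 hr))

theorem rhoU_le_coe_iff [IsProbabilityMeasure μ] (hc : ConcaveOn ℝ univ u) (hm : Monotone u)
    (hnc : ∃ x y, u x ≠ u y) (hu0 : ∃ x, u0 < u x) {X : Ω →ₘ[μ] ℝ} (hX : EssBdd X) (r : ℝ) :
    rhoU μ u u0 X ≤ r ↔ u0 ≤ ∫ ω, u (X ω + r) ∂μ := by
  obtain ⟨m, -, hiff⟩ := exists_integral_comp_add_eq hc hm hnc hu0 hX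
  rw [rhoU_eq_of_forall_le_iff hiff, EReal.coe_le_coe_iff, hiff]

theorem convex_epigraph_rhoU [IsProbabilityMeasure μ] (hc : ConcaveOn ℝ univ u)
    (hm : Monotone u) (hnc : ∃ x y, u x ≠ u y) (hu0 : ∃ x, u0 < u x) :
    Convex ℝ {p : (Ω →ₘ[μ] ℝ) × ℝ | EssBdd p.1 ∧ rhoU μ u u0 p.1 ≤ ((p.2 : ℝ) : EReal)} := by
  rintro ⟨X, r⟩ ⟨hX, hXr⟩ ⟨Y, s⟩ ⟨hY, hYs⟩ a b ha hb hab
  have hXY : EssBdd (a • X + b • Y) := (hX.smul a).add (hY.smul b)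
  refine ⟨hXY, ?_⟩
  simp only [Prod.fst_add, Prod.snd_add, Prod.smul_fst, Prod.smul_snd, smul_eq_mul] at *
  rw [rhoU_le_coe_iff hc hm hnc hu0 hX] at hXr
  rw [rhoU_le_coe_iff hc hm hnc hu0 hY] at hYs
  rw [rhoU_le_coe_iff hc hm hnc hu0 hXY]
  have hcomb : (fun ω => a * (X ω + r) + b * (Y ω + s))
      =ᵐ[μ] fun ω => (a • X + b • Y) ω + (a * r + b * s) := by
    filter_upwards [AEEqFun.coeFn_add (a • X) (b • Y), AEEqFun.coeFn_smul a X,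
      AEEqFun.coeFn_smul b Y] with ω h1 h2 h3
    rw [h1, Pi.add_apply, h2, h3, Pi.smul_apply, Pi.smul_apply, smul_eq_mul, smul_eq_mul]
    ring
  have hcomb' := hcomb.fun_comp u
  calc u0 = a * u0 + b * u0 := by rw [← add_mul, hab, one_mul]
    _ ≤ a * ∫ ω, u (X ω + r) ∂μ + b * ∫ ω, u (Y ω + s) ∂μ := by gcongr
    _ ≤ ∫ ω, u (a * (X ω + r) + b * (Y ω + s)) ∂μ :=
      hc.mul_integral_add_mul_integral_le (hm.integrable_comp_add hX r)
        (hm.integrable_comp_add hY s) ha hb hab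
        ((hm.integrable_comp_add hXY (a * r + b * s)).congr hcomb'.symm)
    _ = ∫ ω, u ((a • X + b • Y) ω + (a * r + b * s)) ∂μ := integral_congr_ae hcomb'

end Shortfall

def penaltyUAt (μ : Measure Ω) (u : ℝ → ℝ) (u0 : ℝ) (Q : Measure Ω) (lam : ℝ) : EReal :=
  ((1 / lam : ℝ) : EReal) *
    (((u0 : ℝ) : EReal) + eintegral μ (fun ω => uConj u (lam * (Q.rnDeriv μ ω).toReal)))

/-- The penalty `α(Q) = sup_{λ > 0} (u₀ + E[u•(λ dQ/dP)]) / λ` of the dual representation. -/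
def penaltyU (μ : Measure Ω) (u : ℝ → ℝ) (u0 : ℝ) (Q : Measure Ω) : EReal :=
  ⨆ lam ∈ Ioi (0 : ℝ), penaltyUAt μ u u0 Q lam

section Duality

variable {μ Q : Measure Ω} {u : ℝ → ℝ} {u0 : ℝ}

theorem integral_mul_rnDeriv [IsFiniteMeasure μ] [IsFiniteMeasure Q] (hQ : Q ≪ μ)
    (f : Ω → ℝ) : ∫ ω, f ω * (Q.rnDeriv μ ω).toReal ∂μ = ∫ ω, f ω ∂Q := by
  simp_rw [mul_comm (f _), ← smul_eq_mul]
  exact integral_rnDeriv_smul hQ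

theorem eintegral_fenchelYoung_bound [IsProbabilityMeasure μ] [IsProbabilityMeasure Q]
    (hQ : Q ≪ μ) (hm : Monotone u) {X : Ω →ₘ[μ] ℝ} (hX : EssBdd X) (lam m : ℝ) :
    eintegral μ (fun ω => (((X ω + m) * (lam * (Q.rnDeriv μ ω).toReal) - u (X ω + m) : ℝ) : EReal))
      = ((lam * (m + ∫ ω, X ω ∂Q) - ∫ ω, u (X ω + m) ∂μ : ℝ) : EReal) := by
  obtain ⟨C, hC⟩ := hX
  have hXQ : Integrable (fun ω => X ω) Q :=
    Integrable.mono' (integrable_const C) (X.aestronglyMeasurable.mono_ac hQ)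
      (hQ.ae_le (hC.mono fun ω h => by rwa [Real.norm_eq_abs]))
  have hXD : Integrable (fun ω => (X ω + m) * (Q.rnDeriv μ ω).toReal) μ :=
    Measure.integrable_toReal_rnDeriv.bdd_mul (c := C + |m|)
      (X.aestronglyMeasurable.add aestronglyMeasurable_const)
      (hC.mono fun ω h => by
        simpa only [Real.norm_eq_abs] using (abs_add_le _ _).trans (by linarith))
  have hint : Integrable
      (fun ω => lam * ((X ω + m) * (Q.rnDeriv μ ω).toReal) - u (X ω + m)) μ :=
    (hXD.const_mul lam).sub (hm.integrable_comp_add ⟨C, hC⟩ m)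
  simp_rw [mul_left_comm _ lam]
  rw [eintegral_coe hint,
    integral_sub (hXD.const_mul lam) (hm.integrable_comp_add ⟨C, hC⟩ m), integral_const_mul,
    integral_mul_rnDeriv hQ, integral_add hXQ (integrable_const m), integral_const]
  simp [add_comm]

theorem penaltyUAt_le [IsProbabilityMeasure μ] [IsProbabilityMeasure Q] (hQ : Q ≪ μ)
    (hm : Monotone u) {X : Ω →ₘ[μ] ℝ} (hX : EssBdd X) {lam : ℝ} (hlam : 0 < lam) {m : ℝ}
    (hfeas : u0 ≤ ∫ ω, u (X ω + m) ∂μ) :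
    penaltyUAt μ u u0 Q lam ≤ ((m + ∫ ω, X ω ∂Q : ℝ) : EReal) := by
  have hconj : eintegral μ (fun ω => uConj u (lam * (Q.rnDeriv μ ω).toReal))
      ≤ ((lam * (m + ∫ ω, X ω ∂Q) - ∫ ω, u (X ω + m) ∂μ : ℝ) : EReal) := by
    rw [← eintegral_fenchelYoung_bound hQ hm hX]
    exact eintegral_mono fun ω => uConj_le u _ _
  have hgap : (u0 - ∫ ω, u (X ω + m) ∂μ) / lam ≤ 0 :=
    div_nonpos_of_nonpos_of_nonneg (by linarith) hlam.le
  calc penaltyUAt μ u u0 Q lam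
      ≤ ((1 / lam : ℝ) : EReal) * (((u0 : ℝ) : EReal) +
          ((lam * (m + ∫ ω, X ω ∂Q) - ∫ ω, u (X ω + m) ∂μ : ℝ) : EReal)) :=
        mul_le_mul_of_nonneg_left (by gcongr) (EReal.coe_nonneg.2 (by positivity))
    _ = ((m + ∫ ω, X ω ∂Q + (u0 - ∫ ω, u (X ω + m) ∂μ) / lam : ℝ) : EReal) := by
        rw [← EReal.coe_add, ← EReal.coe_mul]
        congr 1
        field_simp
        ring
    _ ≤ ((m + ∫ ω, X ω ∂Q : ℝ) : EReal) := EReal.coe_le_coe_iff.2 (by linarith)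

theorem penaltyUAt_eq [IsProbabilityMeasure μ] [IsProbabilityMeasure Q] (hQ : Q ≪ μ)
    (hm : Monotone u) {X : Ω →ₘ[μ] ℝ} (hX : EssBdd X) {lam : ℝ} (hlam : 0 < lam) {m : ℝ}
    (hm0 : ∫ ω, u (X ω + m) ∂μ = u0)
    (hsup : ∀ᵐ ω ∂μ, ∀ x, u x ≤ u (X ω + m) + lam * (Q.rnDeriv μ ω).toReal * (x - (X ω + m))) :
    penaltyUAt μ u u0 Q lam = ((m + ∫ ω, X ω ∂Q : ℝ) : EReal) := by
  have hconj : eintegral μ (fun ω => uConj u (lam * (Q.rnDeriv μ ω).toReal))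
      = ((lam * (m + ∫ ω, X ω ∂Q) - u0 : ℝ) : EReal) := by
    rw [← hm0, ← eintegral_fenchelYoung_bound hQ hm hX]
    exact eintegral_congr_ae (hsup.mono fun ω h => uConj_eq_of_le_add_mul h)
  rw [penaltyUAt, hconj, ← EReal.coe_add, ← EReal.coe_mul]
  congr 1
  field_simp
  ring

theorem exists_isProbabilityMeasure_mul_rnDeriv_ae_eq [IsFiniteMeasure μ] {W : Ω → ℝ}
    (hWm : Measurable W) (hW0 : ∀ ω, 0 ≤ W ω) (hWi : Integrable W μ)
    (hpos : 0 < ∫ ω, W ω ∂μ) :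
    ∃ Q : Measure Ω, IsProbabilityMeasure Q ∧ Q ≪ μ ∧
      ∀ᵐ ω ∂μ, (∫ ω, W ω ∂μ) * (Q.rnDeriv μ ω).toReal = W ω := by
  set lam := ∫ ω, W ω ∂μ
  have hZ0 : ∀ ω, 0 ≤ W ω / lam := fun ω => div_nonneg (hW0 ω) hpos.le
  refine ⟨μ.withDensity fun ω => ENNReal.ofReal (W ω / lam), ⟨?_⟩,
    withDensity_absolutelyContinuous _ _, ?_⟩
  · rw [withDensity_apply _ MeasurableSet.univ, setLIntegral_univ,
      ← ofReal_integral_eq_lintegral_ofReal (hWi.div_const lam) (ae_of_all _ hZ0),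
      integral_div, div_self hpos.ne', ENNReal.ofReal_one]
  · filter_upwards [Measure.rnDeriv_withDensity μ (hWm.div_const lam).ennreal_ofReal] with ω hω
    rw [hω, ENNReal.toReal_ofReal (hZ0 ω), mul_div_cancel₀ _ hpos.ne']

theorem exists_density_supergradient [IsProbabilityMeasure μ] (hc : ConcaveOn ℝ univ u)
    (hm : Monotone u) {Y : Ω → ℝ} (hY : Measurable Y) {c : ℝ} (hYc : ∀ᵐ ω ∂μ, c ≤ Y ω)
    (hint : Integrable (fun ω => u (Y ω)) μ) {x0 : ℝ} (hx0 : ∫ ω, u (Y ω) ∂μ < u x0) :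
    ∃ Q : Measure Ω, IsProbabilityMeasure Q ∧ Q ≪ μ ∧ ∃ lam > 0,
      ∀ᵐ ω ∂μ, ∀ x, u x ≤ u (Y ω) + lam * (Q.rnDeriv μ ω).toReal * (x - Y ω) := by
  set D := fun y => derivWithin u (Iio y) y
  have hsup : ∀ y x, u x ≤ u y + D y * (x - y) := fun y x =>
    hc.le_add_leftDeriv_mul (by simp) (mem_univ x)
  have hanti : Antitone D := by simpa using hc.antitoneOn_leftDeriv
  have hD0 : ∀ y, 0 ≤ D y := fun y => (hm.monotoneOn _).derivWithin_nonneg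
  have hWm : Measurable fun ω => D (Y ω) := hanti.measurable.comp hY
  have hWi : Integrable (fun ω => D (Y ω)) μ :=
    Integrable.mono' (integrable_const (D c)) hWm.aestronglyMeasurable
      (hYc.mono fun ω h => by rw [Real.norm_eq_abs, abs_of_nonneg (hD0 _)]; exact hanti h)
  -- if `D ∘ Y` vanished a.e., `Y` would maximize `u` a.s., contradicting `E[u(Y)] < u x0`
  have hpos : 0 < ∫ ω, D (Y ω) ∂μ := by
    refine (integral_nonneg fun ω => hD0 _).lt_of_ne fun h => hx0.not_ge ?_
    have hW0 := (integral_eq_zero_iff_of_nonneg (fun ω => hD0 _) hWi).1 h.symm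
    simpa using integral_mono_ae (integrable_const (u x0)) hint
      (hW0.mono fun ω hω => by simpa [hω] using hsup (Y ω) x0)
  obtain ⟨Q, hQ, hQμ, hdens⟩ :=
    exists_isProbabilityMeasure_mul_rnDeriv_ae_eq hWm (fun ω => hD0 _) hWi hpos
  exact ⟨Q, hQ, hQμ, _, hpos, hdens.mono fun ω h x => by rw [h]; exact hsup (Y ω) x⟩

end Duality

section Representation

variable {μ : Measure Ω} {u : ℝ → ℝ} {u0 : ℝ}

theorem rhoU_eq_iSup [IsProbabilityMeasure μ] (hc : ConcaveOn ℝ univ u) (hm : Monotone u)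
    (hnc : ∃ x y, u x ≠ u y) (hu0 : ∃ x, u0 < u x) {X : Ω →ₘ[μ] ℝ} (hX : EssBdd X) :
    rhoU μ u u0 X = ⨆ Q : {Q : Measure Ω // IsProbabilityMeasure Q ∧ Q ≪ μ},
      ((∫ ω, -(X ω) ∂(Q : Measure Ω) : ℝ) : EReal) + penaltyU μ u u0 Q := by
  obtain ⟨m, hm0, hiff⟩ := exists_integral_comp_add_eq hc hm hnc hu0 hX
  rw [rhoU_eq_of_forall_le_iff hiff]
  have hsplit : ∀ a : ℝ, (m : EReal) = ((-a : ℝ) : EReal) + ((m + a : ℝ) : EReal) := fun a => by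
    rw [← EReal.coe_add, neg_add_cancel_comm_assoc]
  refine le_antisymm ?_ (iSup_le fun ⟨Q, hQ, hQμ⟩ => ?_)
  · obtain ⟨C, hC⟩ := hX
    obtain ⟨x0, hx0⟩ := hu0
    obtain ⟨Q, hQ, hQμ, lam, hlam, hsup⟩ := exists_density_supergradient hc hm
      (X.stronglyMeasurable.measurable.add_const m) (c := -C + m)
      (hC.mono fun ω h => by linarith [(abs_le.1 h).1]) (hm.integrable_comp_add ⟨C, hC⟩ m)
      (hm0.trans_lt hx0)
    refine le_iSup_of_le ⟨Q, hQ, hQμ⟩ ?_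
    rw [integral_neg, hsplit (∫ ω, X ω ∂Q), ← penaltyUAt_eq hQμ hm ⟨C, hC⟩ hlam hm0 hsup]
    gcongr
    exact le_iSup₂ (f := fun lam _ => penaltyUAt μ u u0 Q lam) lam hlam
  · rw [integral_neg, hsplit (∫ ω, X ω ∂Q)]
    gcongr
    exact iSup₂_le fun lam hlam => penaltyUAt_le hQμ hm hX hlam hm0.ge

theorem continuous_ip_wtop1 {P D : Set (Ω →ₘ[μ] ℝ)} {W : Ω →ₘ[μ] ℝ} (hW : W ∈ D) :
    @Continuous P ℝ (wtop1 P D) _ fun X => ip (X : Ω →ₘ[μ] ℝ) W :=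
  let := wtop1 P D
  continuous_pi_iff.1 (continuous_induced_dom (t := Pi.topologicalSpace)
    (f := fun (X : P) (Z : D) => ip (X : Ω →ₘ[μ] ℝ) (Z : Ω →ₘ[μ] ℝ))) ⟨W, hW⟩

theorem continuous_integral_wtop1 [IsFiniteMeasure μ] {Q : Measure Ω} [IsFiniteMeasure Q]
    (hQ : Q ≪ μ) :
    @Continuous {f : Ω →ₘ[μ] ℝ | EssBdd f} ℝ
      (wtop1 {f : Ω →ₘ[μ] ℝ | EssBdd f} {f : Ω →ₘ[μ] ℝ | Integrable f μ}) _
      fun X => ∫ ω, (X : Ω →ₘ[μ] ℝ) ω ∂Q := by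
  set D : Ω →ₘ[μ] ℝ := AEEqFun.mk (fun ω => (Q.rnDeriv μ ω).toReal)
    (Measure.measurable_rnDeriv Q μ).ennreal_toReal.aestronglyMeasurable
  have hD : D =ᵐ[μ] fun ω => (Q.rnDeriv μ ω).toReal := AEEqFun.coeFn_mk _ _
  have hip : ∀ X : Ω →ₘ[μ] ℝ, ∫ ω, X ω ∂Q = ip X D := fun X => by
    rw [ip, ← integral_mul_rnDeriv hQ]
    exact integral_congr_ae (hD.mono fun ω h => by simp only [h])
  simp_rw [hip]
  exact continuous_ip_wtop1 (Measure.integrable_toReal_rnDeriv.congr hD.symm)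

theorem _root_.Continuous.lowerSemicontinuous_coe_add {α : Type*} [TopologicalSpace α]
    {φ : α → ℝ} (hφ : Continuous φ) (c : EReal) :
    LowerSemicontinuous fun x => (φ x : EReal) + c :=
  (continuous_coe_real_ereal.comp hφ).lowerSemicontinuous.add' lowerSemicontinuous_const
    fun _ => EReal.continuousAt_add (Or.inl (EReal.coe_ne_top _)) (Or.inl (EReal.coe_ne_bot _))

theorem lowerSemicontinuous_rhoU [IsProbabilityMeasure μ] (hc : ConcaveOn ℝ univ u)
    (hm : Monotone u) (hnc : ∃ x y, u x ≠ u y) (hu0 : ∃ x, u0 < u x) :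
    @LowerSemicontinuous (↥{f : Ω →ₘ[μ] ℝ | EssBdd f}) EReal
      (wtop1 {f : Ω →ₘ[μ] ℝ | EssBdd f} {f : Ω →ₘ[μ] ℝ | Integrable f μ}) _
      (fun X : ↥{f : Ω →ₘ[μ] ℝ | EssBdd f} => rhoU μ u u0 (X : Ω →ₘ[μ] ℝ)) := by
  let := wtop1 {f : Ω →ₘ[μ] ℝ | EssBdd f} {f : Ω →ₘ[μ] ℝ | Integrable f μ}
  simp_rw [fun X : ↥{f : Ω →ₘ[μ] ℝ | EssBdd f} => rhoU_eq_iSup hc hm hnc hu0 X.2, integral_neg]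
  refine lowerSemicontinuous_iSup fun Q => ?_
  have := Q.2.1
  exact (continuous_integral_wtop1 Q.2.2).neg.lowerSemicontinuous_coe_add _

end Representation

/-- convexity, `σ(L^∞,L^1)`-lower semicontinuity and dual representation of
the utility-based risk measure `ρ_u` on `L^∞`. -/
theorem statement19 {μ : Measure Ω} [IsProbabilityMeasure μ]
    (u : ℝ → ℝ) (u0 : ℝ)
    (hu_nonconst : ∃ x y : ℝ, u x ≠ u y)
    (hu_conc : ConcaveOn ℝ Set.univ u)
    (hu_mono : Monotone u)
    (hu0 : ∃ x : ℝ, u0 < u x) :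
    -- convexity (the epigraph of `ρ_u` over `L^∞` is convex)
    (Convex ℝ {p : (Ω →ₘ[μ] ℝ) × ℝ | EssBdd p.1 ∧ rhoU μ u u0 p.1 ≤ ((p.2 : ℝ) : EReal)}) ∧
    -- `σ(L^∞,L^1)`-lower semicontinuity
    (@LowerSemicontinuous (↥{f : Ω →ₘ[μ] ℝ | EssBdd f}) EReal
        (wtop1 {f : Ω →ₘ[μ] ℝ | EssBdd f} {f : Ω →ₘ[μ] ℝ | Integrable f μ}) _
        (fun X : ↥{f : Ω →ₘ[μ] ℝ | EssBdd f} => rhoU μ u u0 (X : Ω →ₘ[μ] ℝ))) ∧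
    -- dual representation
    (∀ X : Ω →ₘ[μ] ℝ, EssBdd X →
      rhoU μ u u0 X =
        ⨆ Q : {Q : Measure Ω // IsProbabilityMeasure Q ∧ Q ≪ μ},
          (((∫ ω, -(X ω) ∂(Q : Measure Ω)) : ℝ) : EReal) +
            ⨆ lam ∈ Set.Ioi (0 : ℝ),
              ((1 / lam : ℝ) : EReal) *
                (((u0 : ℝ) : EReal) +
                  eintegral μ (fun ω =>
                    uConj u (lam * ((Q : Measure Ω).rnDeriv μ ω).toReal)))) :=
  ⟨convex_epigraph_rhoU hu_conc hu_mono hu_nonconst hu0,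
    lowerSemicontinuous_rhoU hu_conc hu_mono hu_nonconst hu0,
    fun _ hX => rhoU_eq_iSup hu_conc hu_mono hu_nonconst hu0 hX⟩

end SystemicRisk
end
end
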